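/- arXiv:0810.4040 — 4 statements merged into one kernel-verified Lean document; each statement's English description precedes it below -/
import Mathlib

section
/- Let K be a field of characteristic 0, let M be a K[[t]]-module that is free with basis η⁽⁰⁾, …, η⁽ⁿ⁻¹⁾ and carries a derivation ∇ (over θ = t·d/dt) with ∇η⁽ⁱ⁾ = η⁽ⁱ⁺¹⁾ for i < n−1. Suppose ⟨·,·⟩ : M × M → K[[t]] is K[[t]]-bilinear and horizontal (i.e., θ⟨x,y⟩ = ⟨∇x,y⟩ + ⟨x,∇y⟩), and ⟨η⁽⁰⁾, η⁽ⁱ⁾⟩ = 0 for all 0 ≤ i < n−1. Then for all 0 ≤ i ≤ n−1, ⟨η⁽ⁱ⁾, η⁽ⁿ⁻¹⁻ⁱ⁾⟩ = (−1)ⁱ·γ, where γ = ⟨η⁽⁰⁾, η⁽ⁿ⁻¹⁾⟩. -/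
open PowerSeries

/-- The logarithmic derivative `θ = t·d/dt` on formal power series. -/
noncomputable def theta {K : Type*} [CommRing K] (f : K⟦X⟧) : K⟦X⟧ :=
  PowerSeries.X * PowerSeries.derivative K f

/- Horizontality turns a vanishing value `⟨ηⁱ, ηʲ⟩ = 0` into `⟨ηⁱ⁺¹, ηʲ⟩ = -⟨ηⁱ, ηʲ⁺¹⟩`, so moving one
derivative from the right slot to the left flips the sign; the vanishing of `⟨η⁰, ηᵏ⟩` for `k < n - 1`
propagates, by induction on `i`, to every `⟨ηⁱ, ηʲ⟩` with `i + j < n - 1`, which keeps the sign rule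
available all along the antidiagonal `i + j = n - 1`. -/

lemma theta_zero {K : Type*} [CommRing K] : theta (0 : K⟦X⟧) = 0 := by
  simp [theta]

lemma pairing_succ_left_eq_neg_of_eq_zero {K : Type*} [CommRing K] {M : Type*} [AddCommGroup M]
    [Module K⟦X⟧ M] {N : ℕ} (η : ℕ → M) (D : M →+ M) (hDη : ∀ i, i < N → D (η i) = η (i + 1))
    (B : M →ₗ[K⟦X⟧] M →ₗ[K⟦X⟧] K⟦X⟧)
    (hhor : ∀ x y : M, theta (B x y) = B (D x) y + B x (D y))
    {i j : ℕ} (hi : i < N) (hj : j < N) (h : B (η i) (η j) = 0) :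
    B (η (i + 1)) (η j) = -B (η i) (η (j + 1)) := by
  have hsum := hhor (η i) (η j)
  rw [h, theta_zero, hDη i hi, hDη j hj] at hsum
  exact eq_neg_of_add_eq_zero_left hsum.symm

lemma eq_neg_one_pow_mul_of_shift {R : Type*} [Ring R] {N : ℕ} (p : ℕ → ℕ → R)
    (hshift : ∀ i j, i + j < N → p i j = 0 → p (i + 1) j = -p i (j + 1))
    (hvan : ∀ k, k < N → p 0 k = 0) :
    ∀ i j, i + j ≤ N → p i j = (-1) ^ i * p 0 (i + j) := by
  intro i
  induction i with
  | zero => intro j _; simp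
  | succ i ih =>
    intro j hij
    have hzero : p i j = 0 := by rw [ih j (by omega), hvan (i + j) (by omega), mul_zero]
    rw [hshift i j (by omega) hzero, ih (j + 1) (by omega), pow_succ, mul_neg_one, neg_mul,
      show i + (j + 1) = i + 1 + j by omega]

theorem pairing_antidiagonal_general {K : Type*} [Field K] {n : ℕ}
    {M : Type*} [AddCommGroup M] [Module K⟦X⟧ M]
    (η : ℕ → M)
    (D : M →+ M)
    (hDη : ∀ i, i < n - 1 → D (η i) = η (i + 1))
    (B : M →ₗ[K⟦X⟧] M →ₗ[K⟦X⟧] K⟦X⟧)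
    (hhor : ∀ x y : M, theta (B x y) = B (D x) y + B x (D y))
    (hvan : ∀ i, i < n - 1 → B (η 0) (η i) = 0) :
    ∀ i, i ≤ n - 1 →
      B (η i) (η (n - 1 - i)) = (-1) ^ i * B (η 0) (η (n - 1)) := by
  intro i hi
  have hsign := eq_neg_one_pow_mul_of_shift (fun i j => B (η i) (η j))
    (fun i j _ => pairing_succ_left_eq_neg_of_eq_zero η D hDη B hhor (by omega) (by omega))
    hvan i (n - 1 - i) (by omega)
  rwa [Nat.add_sub_cancel' hi] at hsign

/-- Parity lemma computation: if `⟨η⁰, ηⁱ⟩ = 0` for `i < n-1` then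
`⟨ηⁱ, η^{n-1-i}⟩ = (-1)ⁱ γ` with `γ = ⟨η⁰, η^{n-1}⟩`. -/
theorem pairing_antidiagonal {K : Type*} [Field K] [CharZero K] {n : ℕ} (hn : 1 ≤ n)
    {M : Type*} [AddCommGroup M] [Module K⟦X⟧ M]
    (η : ℕ → M) (b : Module.Basis (Fin n) K⟦X⟧ M) (hb : ∀ i : Fin n, b i = η i)
    (D : M →+ M)
    (hD : ∀ (f : K⟦X⟧) (x : M), D (f • x) = theta f • x + f • D x)
    (hDη : ∀ i, i < n - 1 → D (η i) = η (i + 1))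
    (B : M →ₗ[K⟦X⟧] M →ₗ[K⟦X⟧] K⟦X⟧)
    (hhor : ∀ x y : M, theta (B x y) = B (D x) y + B x (D y))
    (hvan : ∀ i, i < n - 1 → B (η 0) (η i) = 0) :
    ∀ i, i ≤ n - 1 →
      B (η i) (η (n - 1 - i)) = (-1) ^ i * B (η 0) (η (n - 1)) :=
  pairing_antidiagonal_general η D hDη B hhor hvan
end

section
/- Let K be a field of characteristic 0, let L = θ⁴ + a₃θ³ + a₂θ² + a₁θ + a₀ with aᵢ ∈ K[[t]], aᵢ(0) = 0, satisfying the self-adjointness relation a₁ = θ(a₂) + (1/2)a₂a₃ − (1/2)θ²(a₃) − (3/4)a₃θ(a₃) − (1/8)a₃³. Let F ∈ 1 + tK[[t]] be the unique power series solution of L, let β ∈ 1 + tK[[t]] solve 2θβ = a₃β, and let M = K[[t]]⁴ with connection ∇ over θ determined by ∇η⁽ⁱ⁾ = η⁽ⁱ⁺¹⁾ for i ≤ 2 and ∇η⁽³⁾ = −(a₃η⁽³⁾ + a₂η⁽²⁾ + a₁η⁽¹⁾ + a₀η⁽⁰⁾). Then the element u₀ = β[Fη⁽³⁾ − (θF)η⁽²⁾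 + (θ²F)η⁽¹⁾ − (θ³F)η⁽⁰⁾] + (θβ)[Fη⁽²⁾ − (θ²F)η⁽⁰⁾] + (βa₂ − θ²β)[Fη⁽¹⁾ − (θF)η⁽⁰⁾] is horizontal: ∇u₀ = 0. -/
/-!
Write `u₀ = c₃η⁽³⁾ + c₂η⁽²⁾ + c₁η⁽¹⁾ + c₀η⁽⁰⁾`. For the companion connection, `∇u₀ = 0` says
`θc₃ + c₂ = a₃c₃`, `θc₂ + c₁ = a₂c₃`, `θc₁ + c₀ = a₁c₃`, `θc₀ = a₀c₃`, i.e. `c₃ = βF` solves the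
adjoint equation. The first relation is `2θβ = a₃β`, the second is formal, and the last two
reduce (the last one via `LF = 0`) to the single identity `a₁β = θ(βa₂) − θ³β`. The latter is the
self-adjointness relation: `θβ = a₃β/2` gives `8θ³β = (4θ²a₃ + 6a₃θa₃ + a₃³)β`.
-/

open PowerSeries

section Theta

variable {R : Type*} [CommRing R]

theorem theta_add (f g : R⟦X⟧) : theta (f + g) = theta f + theta g := by
  simp [theta, mul_add]

theorem theta_sub (f g : R⟦X⟧) : theta (f - g) = theta f - theta g := by
  simp [theta, mul_sub]

theorem theta_neg (f : R⟦X⟧) : theta (-f) = -theta f := by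
  simp [theta]

theorem theta_mul (f g : R⟦X⟧) : theta (f * g) = theta f * g + f * theta g := by
  simp only [theta, Derivation.leibniz, smul_eq_mul]
  ring

theorem eight_mul_theta_theta_theta_of_two_mul_theta {a b : R⟦X⟧}
    (h : 2 * theta b = a * b) :
    8 * theta (theta (theta b)) = (4 * theta (theta a) + 6 * a * theta a + a ^ 3) * b := by
  have h₁ := congrArg theta (two_mul (theta b) ▸ h)
  have h₂ := congrArg theta h₁
  simp only [theta_add, theta_mul] at h₁ h₂
  linear_combination 4 * h₂ + 2 * a * h₁ + (4 * theta a + a ^ 2) * h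

end Theta

section SelfAdjoint

variable {K : Type*} [Field K] [CharZero K] {a1 a2 a3 β : K⟦X⟧}

theorem eight_mul_eq_of_selfAdjoint
    (hsa : a1 = theta a2 + C (1/2 : K) * (a2 * a3) - C (1/2 : K) * theta (theta a3)
      - C (3/4 : K) * (a3 * theta a3) - C (1/8 : K) * a3 ^ 3) :
    8 * a1 = 8 * theta a2 + 4 * (a2 * a3) - 4 * theta (theta a3) - 6 * (a3 * theta a3)
      - a3 ^ 3 := by
  have hC (c : K) : (8 : K⟦X⟧) * C c = C (8 * c) := by rw [map_mul, map_ofNat]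
  rw [hsa]
  simp only [mul_sub, mul_add, ← mul_assoc, hC]
  norm_num only [map_ofNat C, map_one, one_mul]

theorem mul_eq_theta_sub_theta_theta_theta_of_selfAdjoint
    (hsa : a1 = theta a2 + C (1/2 : K) * (a2 * a3) - C (1/2 : K) * theta (theta a3)
      - C (3/4 : K) * (a3 * theta a3) - C (1/8 : K) * a3 ^ 3)
    (hβ : 2 * theta β = a3 * β) :
    a1 * β = theta (β * a2) - theta (theta (theta β)) := by
  have h8 : (8 : K⟦X⟧) ≠ 0 := by
    rw [← map_ofNat C 8]
    simp
  refine mul_left_cancel₀ h8 ?_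
  rw [theta_mul]
  linear_combination β * eight_mul_eq_of_selfAdjoint hsa
    + eight_mul_theta_theta_theta_of_two_mul_theta hβ - 4 * a2 * hβ

end SelfAdjoint

theorem companion_horizontal {S M : Type*} [CommRing S] [AddCommGroup M] [Module S M]
    {δ : S → S} {a0 a1 a2 a3 : S} {η : ℕ → M} {D : M →+ M}
    (hD : ∀ (f : S) (x : M), D (f • x) = δ f • x + f • D x)
    (hη : ∀ i ≤ 2, D (η i) = η (i + 1))
    (hη3 : D (η 3) = -(a3 • η 3 + a2 • η 2 + a1 • η 1 + a0 • η 0))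
    {c0 c1 c2 c3 : S} (h3 : δ c3 + c2 = a3 * c3) (h2 : δ c2 + c1 = a2 * c3)
    (h1 : δ c1 + c0 = a1 * c3) (h0 : δ c0 = a0 * c3) :
    D (c3 • η 3 + c2 • η 2 + c1 • η 1 + c0 • η 0) = 0 := by
  simp only [map_add, hD, hη3, hη 0 zero_le_two, hη 1 one_le_two, hη 2 le_rfl, Nat.reduceAdd]
  linear_combination (norm := module) h3 • η 3 + h2 • η 2 + h1 • η 1 + h0 • η 0

theorem horizontal_u0_order_four_general {K : Type*} [Field K] [CharZero K]
    (a0 a1 a2 a3 : K⟦X⟧)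
    (hsa : a1 = theta a2 + C (1/2 : K) * (a2 * a3) - C (1/2 : K) * theta (theta a3)
      - C (3/4 : K) * (a3 * theta a3) - C (1/8 : K) * a3 ^ 3)
    (F : K⟦X⟧)
    (hF : theta^[4] F + a3 * theta^[3] F + a2 * theta^[2] F + a1 * theta F + a0 * F = 0)
    (β : K⟦X⟧) (hβ : 2 * theta β = a3 * β)
    {M : Type*} [AddCommGroup M] [Module K⟦X⟧ M]
    (η : ℕ → M) (D : M →+ M)
    (hD : ∀ (f : K⟦X⟧) (x : M), D (f • x) = theta f • x + f • D x)
    (hη : ∀ i ≤ 2, D (η i) = η (i + 1))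
    (hη3 : D (η 3) = -(a3 • η 3 + a2 • η 2 + a1 • η 1 + a0 • η 0)) :
    D (β • (F • η 3 - theta F • η 2 + theta^[2] F • η 1 - theta^[3] F • η 0)
        + theta β • (F • η 2 - theta^[2] F • η 0)
        + (β * a2 - theta^[2] β) • (F • η 1 - theta F • η 0)) = 0 := by
  have hβa1 := mul_eq_theta_sub_theta_theta_theta_of_selfAdjoint hsa hβ
  rw [theta_mul] at hβa1
  simp only [Function.iterate_succ_apply', Function.iterate_zero_apply] at hF ⊢
  convert companion_horizontal hD hη hη3 (c3 := β * F) (c2 := theta β * F - β * theta F)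
    (c1 := β * theta (theta F) + (β * a2 - theta (theta β)) * F)
    (c0 := -(β * theta (theta (theta F))) - theta β * theta (theta F)
      - (β * a2 - theta (theta β)) * theta F) ?_ ?_ ?_ ?_ using 2
  · simp only [smul_add, smul_sub, smul_smul, add_smul, sub_smul, neg_smul]
    abel
  all_goals simp only [theta_add, theta_sub, theta_neg, theta_mul]
  · linear_combination F * hβ
  · ring
  · linear_combination -F * hβa1
  · linear_combination -β * hF - theta (theta (theta F)) * hβ + theta F * hβa1

/-- For an order-4 Calabi-Yau operator, the explicit element `u₀` of `Λ_L` is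
horizontal: `∇u₀ = 0`. -/
theorem horizontal_u0_order_four {K : Type*} [Field K] [CharZero K]
    (a0 a1 a2 a3 : K⟦X⟧) (ha : ∀ a ∈ [a0, a1, a2, a3], constantCoeff a = 0)
    (hsa : a1 = theta a2 + C (1/2 : K) * (a2 * a3) - C (1/2 : K) * theta (theta a3)
      - C (3/4 : K) * (a3 * theta a3) - C (1/8 : K) * a3 ^ 3)
    (F : K⟦X⟧) (hF1 : constantCoeff F = 1)
    (hF : theta^[4] F + a3 * theta^[3] F + a2 * theta^[2] F + a1 * theta F + a0 * F = 0)
    (β : K⟦X⟧) (hβ1 : constantCoeff β = 1) (hβ : 2 * theta β = a3 * β)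
    {M : Type*} [AddCommGroup M] [Module K⟦X⟧ M]
    (η : ℕ → M) (D : M →+ M)
    (hD : ∀ (f : K⟦X⟧) (x : M), D (f • x) = theta f • x + f • D x)
    (hη : ∀ i ≤ 2, D (η i) = η (i + 1))
    (hη3 : D (η 3) = -(a3 • η 3 + a2 • η 2 + a1 • η 1 + a0 • η 0)) :
    D (β • (F • η 3 - theta F • η 2 + theta^[2] F • η 1 - theta^[3] F • η 0)
        + theta β • (F • η 2 - theta^[2] F • η 0)
        + (β * a2 - theta^[2] β) • (F • η 1 - theta F • η 0)) = 0 :=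
  horizontal_u0_order_four_general a0 a1 a2 a3 hsa F hF β hβ η D hD hη hη3
end

section
/- Let K be a field of characteristic 0, let L = θ² + a₁θ + a₀ with a₀, a₁ ∈ K[[t]] and a₀(0) = a₁(0) = 0, and let F ∈ 1 + tK[[t]] be the unique solution of L with F(0) = 1. Let β ∈ 1 + tK[[t]] solve θβ = a₁β. Consider the rank-2 differential module M over K[[t]] with basis η, η' and ∇η = η', ∇η' = −(a₁η' + a₀η). Then u₀ = β[F·η' − (θF)·η] satisfies ∇u₀ = 0, and u₁ = η/F satisfies ∇u₁ = (1/F²)·(F·η' − (θF)·η). -/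
open PowerSeries

lemma theta_inv {K : Type*} [Field K] (f : K⟦X⟧) :
    theta f⁻¹ = -(f⁻¹ * f⁻¹ * theta f) := by
  unfold theta
  rw [PowerSeries.derivative_inv']
  ring

/-- Order 2 case of the adapted basis: `u₀ = β(Fη' − θF·η)` is horizontal and
`∇(η/F) = F⁻²·(Fη' − θF·η)`. -/
theorem order_two_adapted_basis {K : Type*} [Field K] [CharZero K]
    (a0 a1 : K⟦X⟧) (ha0 : constantCoeff a0 = 0) (ha1 : constantCoeff a1 = 0)
    (F : K⟦X⟧) (hF1 : constantCoeff F = 1)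
    (hF : theta^[2] F + a1 * theta F + a0 * F = 0)
    (β : K⟦X⟧) (hβ1 : constantCoeff β = 1) (hβ : theta β = a1 * β)
    {M : Type*} [AddCommGroup M] [Module K⟦X⟧ M]
    (η η' : M) (D : M →+ M)
    (hD : ∀ (f : K⟦X⟧) (x : M), D (f • x) = theta f • x + f • D x)
    (hη : D η = η') (hη' : D η' = -(a1 • η' + a0 • η)) :
    D (β • (F • η' - theta F • η)) = 0 ∧
      D (F⁻¹ • η) = (F⁻¹ * F⁻¹) • (F • η' - theta F • η) := by
  have hFne : constantCoeff F ≠ 0 := by rw [hF1]; exact one_ne_zero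
  have hFinv : F⁻¹ * F = 1 := PowerSeries.inv_mul_cancel F hFne
  have hF2 : theta (theta F) = -(a1 * theta F + a0 * F) := by
    have h : theta (theta F) + a1 * theta F + a0 * F = 0 := hF
    linear_combination h
  constructor
  · rw [hD, map_sub, hD, hD, hη, hη', hF2, hβ]
    let _ : Algebra ℕ K⟦X⟧ := Semiring.toNatAlgebra
    let _ : Algebra ℤ K⟦X⟧ := Ring.toIntAlgebra _
    match_scalars <;> ring
  · rw [hD, hη, theta_inv]
    let _ : Algebra ℕ K⟦X⟧ := Semiring.toNatAlgebra
    let _ : Algebra ℤ K⟦X⟧ := Ring.toIntAlgebra _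
    match_scalars <;> ring_nf
    all_goals linear_combination -F⁻¹ * hFinv
end

section
/- Let K be a field of characteristic 0 and let L = θ⁴ + a₃θ³ + a₂θ² + a₁θ + a₀ ∈ K(t)[θ]. Define b₄ = (5/2)a₃, b₃ = 2a₂ + 2θ(a₃) + (7/4)a₃², b₂ = −a₁ + 4θ(a₂) + (7/2)a₂a₃. Then the self-adjointness relation a₁ = θ(a₂) + (1/2)a₂a₃ − (1/2)θ²(a₃) − (3/4)a₃θ(a₃) − (1/8)a₃³ on L implies the relation 2(βb₂) − 3θ(βb₃) + 4θ²(βb₄) − 5θ³(β) = 0, where β is any nonzero solution of 5·θβ = 2b₄β (equivalently 2θβ = a₃β). -/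
/-!
If `θβ = a₃β`, then conjugating by `β` turns `θ` into the operator `θ + a₃`, so the
left-hand side of (orth) is `β` times a differential polynomial in `a₁, a₂, a₃`. Substituting the
formulas for the `bᵢ` and the self-adjointness relation for `a₁`, that polynomial vanishes
identically.
-/

namespace Derivation

section CommRing

variable {R A : Type*} [CommSemiring R] [CommRing A] [Algebra R A] (D : Derivation R A A)

theorem map_ofNat (n : ℕ) [n.AtLeastTwo] : D (ofNat(n) : A) = 0 :=
  D.map_natCast n

/-- The operator `θ + a`; it equals `β⁻¹ ∘ θ ∘ β` for any unit `β` with `θβ = aβ`. -/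
def twist (a f : A) : A := D f + a * f

theorem map_mul_eq_mul_twist {a β : A} (hβ : D β = a * β) (f : A) :
    D (β * f) = β * D.twist a f := by
  rw [leibniz, hβ, twist, smul_eq_mul, smul_eq_mul]
  ring

end CommRing

variable {R A : Type*} [CommRing R] [Field A] [CharZero A] [Algebra R A] (D : Derivation R A A)

theorem twist_orth_eq_zero {a1 a2 a3 b4 b3 b2 : A}
    (hb4 : b4 = ((5 : A)/2) * a3)
    (hb3 : b3 = 2 * a2 + 2 * D a3 + ((7 : A)/4) * a3 ^ 2)
    (hb2 : b2 = -a1 + 4 * D a2 + ((7 : A)/2) * (a2 * a3))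
    (hsa : a1 = D a2 + ((1 : A)/2) * (a2 * a3) - ((1 : A)/2) * D (D a3)
      - ((3 : A)/4) * (a3 * D a3) - ((1 : A)/8) * a3 ^ 3) :
    2 * b2 - 3 * D.twist a3 b3 + 4 * D.twist a3 (D.twist a3 b4)
      - 5 * D.twist a3 (D.twist a3 (D.twist a3 1)) = 0 := by
  subst hb4 hb3 hb2 hsa
  simp only [twist, map_add, map_zero, leibniz, leibniz_pow, leibniz_div_const, map_ofNat,
    map_one_eq_zero, smul_eq_mul, nsmul_eq_mul]
  ring

end Derivation

theorem exterior_square_orth_general {K A : Type*} [Field K]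
    [Field A] [CharZero A] [Algebra K A] (D : Derivation K A A)
    (a1 a2 a3 : A) (b4 b3 b2 : A)
    (hb4 : b4 = ((5 : A)/2) * a3)
    (hb3 : b3 = 2 * a2 + 2 * D a3 + ((7 : A)/4) * a3 ^ 2)
    (hb2 : b2 = -a1 + 4 * D a2 + ((7 : A)/2) * (a2 * a3))
    (β : A) (hβ : 5 * D β = 2 * b4 * β)
    (hsa : a1 = D a2 + ((1 : A)/2) * (a2 * a3) - ((1 : A)/2) * D (D a3)
      - ((3 : A)/4) * (a3 * D a3) - ((1 : A)/8) * a3 ^ 3) :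
    2 * (β * b2) - 3 * D (β * b3) + 4 * D (D (β * b4)) - 5 * D (D (D β)) = 0 := by
  have hDβ : D β = a3 * β :=
    mul_left_cancel₀ (by norm_num : (5 : A) ≠ 0) (by rw [hβ, hb4]; ring)
  have hD := D.map_mul_eq_mul_twist hDβ
  have hβ1 : D β = β * D.twist a3 1 := by simpa using hD 1
  simp only [hβ1, hD]
  linear_combination β * D.twist_orth_eq_zero hb4 hb3 hb2 hsa

/-- One direction of the order 4 / order 5 correspondence: self-adjointness of the
fourth-order operator implies the first self-adjointness relation (orth) for its
second exterior power, where `5θβ = 2b₄β` (equivalently `2θβ = a₃β`) and `β ≠ 0`. -/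
theorem exterior_square_orth {K A : Type*} [Field K] [CharZero K]
    [Field A] [CharZero A] [Algebra K A] (D : Derivation K A A)
    (a0 a1 a2 a3 : A) (b4 b3 b2 : A)
    (hb4 : b4 = ((5 : A)/2) * a3)
    (hb3 : b3 = 2 * a2 + 2 * D a3 + ((7 : A)/4) * a3 ^ 2)
    (hb2 : b2 = -a1 + 4 * D a2 + ((7 : A)/2) * (a2 * a3))
    (β : A) (hβ0 : β ≠ 0) (hβ : 5 * D β = 2 * b4 * β)
    (hsa : a1 = D a2 + ((1 : A)/2) * (a2 * a3) - ((1 : A)/2) * D (D a3)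
      - ((3 : A)/4) * (a3 * D a3) - ((1 : A)/8) * a3 ^ 3) :
    2 * (β * b2) - 3 * D (β * b3) + 4 * D (D (β * b4)) - 5 * D (D (D β)) = 0 :=
  exterior_square_orth_general D a1 a2 a3 b4 b3 b2 hb4 hb3 hb2 β hβ hsa
end
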